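/- In the black component in initial state with f(t)=Empty and B to move, the black player has a strategy so that the game in the component ends (s becomes empty) and at the end exactly one of the vertices x, y, v5, v6 is empty. -/

import Mathlib

/-- A token type: white tokens are moved by player W, black by player B. -/
inductive Tok | White | Black
deriving DecidableEq

/-- A configuration places at most one token on each vertex. -/
abbrev Config (V : Type) := V → Option Tok

/-- The opponent of a player. -/
def other : Tok → Tok
  | Tok.White => Tok.Black
  | Tok.Black => Tok.White

/-- A legal node-blocking move by player `p`: pick a token of type `p` at `u`
and move it along an arc `(u,v)` to an unoccupied vertex `v`. -/
def legalMove {V : Type} [DecidableEq V] (E : V → V → Prop) (p : Tok)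
    (f f' : Config V) : Prop :=
  ∃ u v, E u v ∧ f u = some p ∧ f v = none ∧
    f' = Function.update (Function.update f u none) v (some p)

/-- The configuration obtained by moving a token of type `p` from `u` to `v`. -/
def mv {V : Type} [DecidableEq V] (f : Config V) (u v : V) (p : Tok) : Config V :=
  Function.update (Function.update f u none) v (some p)

/-- Vertices of the black variable component. -/
inductive BV | s | t | x | y | v1 | v2 | v3 | v4 | v5 | v6 | v7 | v8
deriving DecidableEq

instance : Fintype BV :=
  ⟨⟨{BV.s, BV.t, BV.x, BV.y, BV.v1, BV.v2, BV.v3, BV.v4, BV.v5, BV.v6, BV.v7, BV.v8}, by decide⟩,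
    fun a => by cases a <;> decide⟩

/-- Arcs of the black variable component. -/
def BE : BV → BV → Prop := fun a b =>
  (a, b) ∈ ([(BV.s, BV.v1), (BV.v1, BV.v2), (BV.v2, BV.v3), (BV.v3, BV.t),
    (BV.v4, BV.t), (BV.v4, BV.v2), (BV.v5, BV.v4), (BV.v6, BV.v4),
    (BV.v7, BV.v5), (BV.v8, BV.v6), (BV.x, BV.v7), (BV.y, BV.v8)] : List (BV × BV))

/-- Initial state of the black component with the (white) token at `t` removed. -/
def bInit : Config BV := fun v =>
  match v with
  | BV.s => some Tok.Black | BV.v4 => some Tok.Black | BV.v5 => some Tok.Black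
  | BV.v6 => some Tok.Black | BV.v7 => some Tok.Black | BV.v8 => some Tok.Black
  | BV.v1 => some Tok.White | BV.v2 => some Tok.White
  | BV.x => some Tok.White | BV.y => some Tok.White
  | BV.v3 => none | BV.t => none

/-- `Forces E p goal q f`: with player `q` to move in configuration `f`,
player `p` has a strategy forcing the play to reach a configuration
satisfying `goal` (the opponent always having at least one legal move
until the goal is reached). -/
inductive Forces {V : Type} [DecidableEq V] (E : V → V → Prop) (p : Tok)
    (goal : Config V → Prop) : Tok → Config V → Prop
  | base (q : Tok) (f : Config V) : goal f → Forces E p goal q f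
  | mine (f f' : Config V) : legalMove E p f f' →
      Forces E p goal (other p) f' → Forces E p goal p f
  | theirs (f : Config V) : (∃ f', legalMove E (other p) f f') →
      (∀ f', legalMove E (other p) f f' → Forces E p goal p f') →
      Forces E p goal (other p) f

namespace Forces

variable {V : Type} [DecidableEq V] {E : V → V → Prop} {p : Tok} {goal : Config V → Prop}
  {f : Config V}

theorem move (u v : V) (hE : E u v) (hu : f u = some p) (hv : f v = none)
    (h : Forces E p goal (other p) (mv f u v p)) : Forces E p goal p f :=
  .mine f _ ⟨u, v, hE, hu, hv, rfl⟩ h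

theorem of_unique_reply (u v : V) (hE : E u v) (hu : f u = some (other p)) (hv : f v = none)
    (huniq : ∀ u' v', E u' v' → f u' = some (other p) → f v' = none → u' = u ∧ v' = v)
    (h : Forces E p goal p (mv f u v (other p))) : Forces E p goal (other p) f := by
  refine .theirs f ⟨_, u, v, hE, hu, hv, rfl⟩ ?_
  rintro _ ⟨u', v', hE', hu', hv', rfl⟩
  obtain ⟨rfl, rfl⟩ := huniq u' v' hE' hu' hv'
  exact h

end Forces

/-- in the black component in initial state (t empty, B to move),
B can force the game in the component to end (s empty) with exactly one of
x, y, v5, v6 empty. -/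
theorem stmt_7 :
    Forces BE Tok.Black
      (fun g => g BV.s = none ∧
        ∃ z, (z = BV.x ∨ z = BV.y ∨ z = BV.v5 ∨ z = BV.v6) ∧ g z = none ∧
          ∀ z', (z' = BV.x ∨ z' = BV.y ∨ z' = BV.v5 ∨ z' = BV.v6) →
            g z' = none → z' = z)
      Tok.Black bInit := by
  refine .move .v4 .t (by simp [BE]) rfl rfl ?_
  refine .of_unique_reply .v2 .v3 (by simp [BE]) rfl rfl (by unfold BE; decide) ?_
  refine .move .v5 .v4 (by simp [BE]) rfl rfl ?_
  refine .of_unique_reply .v1 .v2 (by simp [BE]) rfl rfl (by unfold BE; decide) ?_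
  refine .move .s .v1 (by simp [BE]) rfl rfl ?_
  exact .base _ _ (by decide)
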